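/- arXiv:1107.0478 — 6 statements merged into one kernel-verified Lean document; each statement's English description precedes it below -/
import Mathlib

section
/- Under the stated assumptions, for every real β with 0 ≤ β < Λ, lim_{n→∞} P(X_n < 2^{−ℓ^{βn}}) = P(X_∞ = 0). -/
/-!
Put `L n = -log X n`. The bound `f i n x ≤ q * x ^ d i` gives `d (B n) * L n - log q ≤ L (n + 1)`.
On `{X∞ = 0}` we have `L n → ∞`, and once `L n` is large the additive loss `log q` costs at most
a factor `exp (-δ)`, so `log L n ≥ C + ∑ k < n, log d (B k) - δ n`. By the strong law of large
numbers the sum is `n Λ log ℓ + o(n)`, hence `L n ≥ ℓ ^ (β n)` eventually, i.e.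
`X n < 2 ^ (-ℓ ^ (β n))`. On `{X∞ = 1}` the event eventually fails, the threshold being at most
`1 / 2`. So the indicators of these events converge a.s. to that of `{X∞ = 0}`, and dominated
convergence gives the limit of their probabilities.
-/

open MeasureTheory ProbabilityTheory Filter Topology Finset

lemma exists_add_sum_le_of_eventually_le_sub {a b : ℕ → ℝ}
    (h : ∀ᶠ k in atTop, b k ≤ a (k + 1) - a k) :
    ∃ C, ∀ᶠ n in atTop, C + ∑ k ∈ range n, b k ≤ a n := by
  obtain ⟨n₀, hn₀⟩ := eventually_atTop.1 h
  refine ⟨a n₀ - ∑ k ∈ range n₀, b k, eventually_atTop.2 ⟨n₀, fun n hn => ?_⟩⟩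
  induction n, hn using Nat.le_induction with
  | base => simp
  | succ n hn ih =>
    rw [sum_range_succ]
    linarith [hn₀ n hn]

lemma eventually_exp_neg_mul_le_of_mul_sub_le {L e : ℕ → ℝ} {c δ : ℝ} (hδ : 0 < δ)
    (he : ∀ n, 1 ≤ e n) (hrec : ∀ n, e n * L n - c ≤ L (n + 1))
    (hL : Tendsto L atTop atTop) :
    ∀ᶠ n in atTop, Real.exp (-δ) * (e n * L n) ≤ L (n + 1) := by
  have hρ : 0 < 1 - Real.exp (-δ) := sub_pos.2 (Real.exp_lt_one_iff.2 (neg_neg_of_pos hδ))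
  filter_upwards [hL.eventually_ge_atTop (max 0 (c / (1 - Real.exp (-δ))))] with n hn
  have hL0 : 0 ≤ L n := le_of_max_le_left hn
  have hc : c ≤ (1 - Real.exp (-δ)) * L n := by
    rw [← div_le_iff₀' hρ]; exact le_of_max_le_right hn
  nlinarith [hrec n, mul_nonneg (mul_nonneg hρ.le hL0) (sub_nonneg.2 (he n))]

theorem eventually_exp_le_of_mul_sub_le {L e : ℕ → ℝ} {c r μ : ℝ} (hr : r < μ)
    (he : ∀ n, 1 ≤ e n) (hrec : ∀ n, e n * L n - c ≤ L (n + 1))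
    (hL : Tendsto L atTop atTop)
    (hS : Tendsto (fun n : ℕ => (∑ k ∈ range n, Real.log (e k)) / n) atTop (𝓝 μ)) :
    ∀ᶠ n : ℕ in atTop, Real.exp (r * n) ≤ L n := by
  set δ := (μ - r) / 3 with hδ_def
  have hδ : 0 < δ := by positivity
  have hlog : ∀ᶠ k in atTop,
      Real.log (e k) - δ ≤ Real.log (L (k + 1)) - Real.log (L k) := by
    filter_upwards [eventually_exp_neg_mul_le_of_mul_sub_le hδ he hrec hL,
      hL.eventually_gt_atTop 0] with k hk hLk
    have he0 : 0 < e k := one_pos.trans_le (he k)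
    have := Real.log_le_log (by positivity) hk
    rw [Real.log_mul (by positivity) (by positivity), Real.log_mul he0.ne' hLk.ne',
      Real.log_exp] at this
    linarith
  obtain ⟨C, hC⟩ := exists_add_sum_le_of_eventually_le_sub (a := fun k => Real.log (L k)) hlog
  filter_upwards [hC, hS.eventually (lt_mem_nhds (show r + 2 * δ < μ by rw [hδ_def]; linarith)),
    (tendsto_natCast_atTop_atTop.const_mul_atTop hδ).eventually_ge_atTop (-C),
    eventually_gt_atTop 0, hL.eventually_gt_atTop 0] with n hCn hSn hδn hn hLn
  rw [sum_sub_distrib, sum_const, card_range, nsmul_eq_mul] at hCn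
  rw [lt_div_iff₀ (by exact_mod_cast hn)] at hSn
  calc Real.exp (r * n) ≤ Real.exp (Real.log (L n)) := Real.exp_le_exp.2 (by linarith)
    _ = L n := Real.exp_log hLn

lemma lt_two_rpow_neg_of_le_neg_log {x y : ℝ} (hx : 0 < x) (hy : 0 < y)
    (h : y ≤ -Real.log x) : x < 2 ^ (-y) := by
  rw [Real.rpow_def_of_pos two_pos, ← Real.exp_log hx]
  apply Real.exp_lt_exp.2
  nlinarith [Real.log_two_lt_d9]

lemma two_rpow_neg_le_half {y : ℝ} (hy : 1 ≤ y) : (2 : ℝ) ^ (-y) ≤ 1 / 2 :=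
  calc (2 : ℝ) ^ (-y) ≤ 2 ^ (-1 : ℝ) := Real.rpow_le_rpow_of_exponent_le one_le_two (by linarith)
    _ = 1 / 2 := by norm_num [Real.rpow_neg_one]

lemma mul_neg_log_sub_log_le_neg_log {x y q : ℝ} {d : ℕ} (hx : 0 < x) (hy : 0 < y) (hq : 0 < q)
    (h : y ≤ q * x ^ d) : d * -Real.log x - Real.log q ≤ -Real.log y := by
  have := Real.log_le_log hy h
  rw [Real.log_mul hq.ne' (by positivity), Real.log_pow] at this
  linarith

lemma tendsto_neg_log_atTop {x : ℕ → ℝ} (hx : ∀ n, 0 < x n) (h : Tendsto x atTop (𝓝 0)) :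
    Tendsto (fun n => -Real.log (x n)) atTop atTop :=
  tendsto_neg_atBot_atTop.comp <| Real.tendsto_log_nhdsGT_zero.comp <|
    tendsto_nhdsWithin_iff.2 ⟨h, Eventually.of_forall hx⟩

lemma identDistrib_of_measure_eq_singleton {Ω α : Type*} [MeasurableSpace Ω] [MeasurableSpace α]
    [Countable α] [MeasurableSingletonClass α] {μ ν : Measure Ω} {X Y : Ω → α}
    (hX : Measurable X) (hY : Measurable Y) (h : ∀ a, μ {ω | X ω = a} = ν {ω | Y ω = a}) :
    IdentDistrib X Y μ ν where
  aemeasurable_fst := hX.aemeasurable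
  aemeasurable_snd := hY.aemeasurable
  map_eq := Measure.ext_of_singleton fun a => by
    rw [Measure.map_apply hX (measurableSet_singleton a),
      Measure.map_apply hY (measurableSet_singleton a)]
    exact h a

section Uniform

variable {Ω : Type*} [MeasurableSpace Ω] {μ : Measure Ω} [IsFiniteMeasure μ] {ℓ : ℕ}

lemma integral_comp_eq_of_uniform {B : Ω → Fin ℓ} (hB : Measurable B)
    (hunif : ∀ i, μ {ω | B ω = i} = 1 / ℓ) (g : Fin ℓ → ℝ) :
    ∫ ω, g (B ω) ∂μ = (ℓ : ℝ)⁻¹ * ∑ i, g i := by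
  rw [← integral_map hB.aemeasurable (measurable_of_countable g).aestronglyMeasurable,
    integral_fintype .of_finite, mul_sum]
  refine sum_congr rfl fun i _ => ?_
  simp [measureReal_def, Measure.map_apply hB (measurableSet_singleton i), Set.preimage, hunif]

theorem ae_tendsto_average_comp_of_uniform {B : ℕ → Ω → Fin ℓ} (hB : ∀ n, Measurable (B n))
    (hindep : iIndepFun B μ) (hunif : ∀ n i, μ {ω | B n ω = i} = 1 / ℓ) (g : Fin ℓ → ℝ) :
    ∀ᵐ ω ∂μ, Tendsto (fun n : ℕ => (∑ k ∈ range n, g (B k ω)) / n) atTop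
      (𝓝 ((ℓ : ℝ)⁻¹ * ∑ i, g i)) := by
  have hg : Measurable g := measurable_of_countable g
  rw [← integral_comp_eq_of_uniform (hB 0) (hunif 0) g]
  refine strong_law_ae_real (fun n ω => g (B n ω)) ?_
    (fun i j hij => (hindep.indepFun hij).comp hg hg)
    (fun n => (identDistrib_of_measure_eq_singleton (hB n) (hB 0)
      fun i => by rw [hunif, hunif]).comp hg)
  exact (integrable_const (∑ i, |g i|)).mono' (hg.comp (hB 0)).aestronglyMeasurable
    (Eventually.of_forall fun ω => (Real.norm_eq_abs _).trans_le
      (single_le_sum (fun i _ => abs_nonneg (g i)) (mem_univ (B 0 ω))))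

end Uniform

theorem eventually_lt_two_rpow_neg_rpow {a q β μ : ℝ} (ha : 0 < a) (hq : 0 < q)
    (hβμ : β * Real.log a < μ) {e : ℕ → ℕ} (he : ∀ n, 1 ≤ e n) {x : ℕ → ℝ} (hx : ∀ n, 0 < x n)
    (hrec : ∀ n, x (n + 1) ≤ q * x n ^ e n) (hlim : Tendsto x atTop (𝓝 0))
    (havg : Tendsto (fun n : ℕ => (∑ k ∈ range n, Real.log (e k)) / n) atTop (𝓝 μ)) :
    ∀ᶠ n : ℕ in atTop, x n < (2 : ℝ) ^ (-a ^ (β * n)) := by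
  filter_upwards [eventually_exp_le_of_mul_sub_le (L := fun n => -Real.log (x n)) hβμ
    (fun n => by exact_mod_cast he n)
    (fun n => mul_neg_log_sub_log_le_neg_log (hx n) (hx (n + 1)) hq (hrec n))
    (tendsto_neg_log_atTop hx hlim) havg] with n hn
  refine lt_two_rpow_neg_of_le_neg_log (hx n) (by positivity) ?_
  rwa [Real.rpow_def_of_pos ha, ← mul_assoc, mul_comm (Real.log a)]

theorem polarization_rate_lower_general
    {Ω : Type*} [MeasureSpace Ω] [IsProbabilityMeasure (ℙ : Measure Ω)]
    (ℓ : ℕ) (hℓ : 2 ≤ ℓ)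
    (B : ℕ → Ω → Fin ℓ) (hBmeas : ∀ n, Measurable (B n))
    (hBindep : iIndepFun B ℙ)
    (hBunif : ∀ n (i : Fin ℓ), ℙ {ω | B n ω = i} = 1 / ℓ)
    (f : Fin ℓ → ℕ → ℝ → ℝ)
    (hf : ∀ i n, ∀ x ∈ Set.Ioo (0:ℝ) 1, f i n x ∈ Set.Ioo (0:ℝ) 1)
    (X : ℕ → Ω → ℝ) (hXmeas : ∀ n, Measurable (X n))
    (hX0 : ∀ ω, X 0 ω ∈ Set.Ioo (0:ℝ) 1)
    (hXrec : ∀ n ω, X (n+1) ω = f (B n ω) n (X n ω))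
    (Xinf : Ω → ℝ) (hXinfMeas : Measurable Xinf)
    (hXinfVals : ∀ᵐ ω ∂ℙ, Xinf ω = 0 ∨ Xinf ω = 1)
    (hXconv : ∀ᵐ ω ∂ℙ, Tendsto (fun n => X n ω) atTop (𝓝 (Xinf ω)))
    (q : ℝ) (hq : 0 < q) (d : Fin ℓ → ℕ) (hd : ∀ i, 1 ≤ d i)
    (hfd : ∀ i n, ∀ x ∈ Set.Ioo (0:ℝ) 1, f i n x ≤ q * x ^ d i) :
    ∀ β : ℝ, 0 ≤ β → β < (1 / (ℓ : ℝ)) * ∑ i, Real.logb ℓ (d i) →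
      Tendsto (fun n : ℕ => ℙ {ω | X n ω < (2 : ℝ) ^ (-(ℓ : ℝ) ^ (β * n))})
        atTop (𝓝 (ℙ {ω | Xinf ω = 0})) := by
  intro β hβ hβΛ
  have hℓ1 : (1 : ℝ) < ℓ := by exact_mod_cast hℓ
  have hXmem : ∀ n ω, X n ω ∈ Set.Ioo (0 : ℝ) 1 := by
    intro n
    induction n with
    | zero => exact hX0
    | succ n ih => intro ω; rw [hXrec]; exact hf _ _ _ (ih ω)
  have hβμ : β * Real.log ℓ < (ℓ : ℝ)⁻¹ * ∑ i, Real.log (d i) := by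
    have hlog := Real.log_pos hℓ1
    calc β * Real.log ℓ < (1 / (ℓ : ℝ)) * (∑ i, Real.logb ℓ (d i)) * Real.log ℓ :=
          mul_lt_mul_of_pos_right hβΛ hlog
      _ = (ℓ : ℝ)⁻¹ * ∑ i, Real.log (d i) := by
          simp only [Real.logb, ← sum_div]; field_simp
  refine tendsto_measure_of_ae_tendsto_indicator_of_isFiniteMeasure atTop
    (hXinfMeas (measurableSet_singleton 0)) (fun n => measurableSet_lt (hXmeas n) measurable_const) ?_
  filter_upwards [hXconv, hXinfVals, ae_tendsto_average_comp_of_uniform hBmeas hBindep hBunif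
    (fun i => Real.log (d i))] with ω hconv hvals havg
  rcases hvals with h0 | h1
  · rw [h0] at hconv
    filter_upwards [eventually_lt_two_rpow_neg_rpow (by positivity) hq hβμ (fun n => hd _)
      (fun n => (hXmem n ω).1) (fun n => hXrec n ω ▸ hfd _ n _ (hXmem n ω)) hconv havg]
      with n hn
    simp [hn, h0]
  · rw [h1] at hconv
    filter_upwards [hconv.eventually (lt_mem_nhds one_half_lt_one)] with n hn
    have hthr : (2 : ℝ) ^ (-(ℓ : ℝ) ^ (β * n)) ≤ 1 / 2 :=
      two_rpow_neg_le_half (Real.one_le_rpow hℓ1.le (by positivity))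
    simp only [h1, one_ne_zero, iff_false, not_lt]
    linarith

/-- **Mori–Tanaka Proposition 15 (appendix variation): rate of polarization.**
Let `X` be a `(0,1)`-valued process driven by i.i.d. uniform choices `B n : Fin ℓ` via
deterministic maps `f i n : (0,1) → (0,1)`, i.e. `X (n+1) = f (B n) n (X n)`, with `X 0`
independent of `(B n)`. Assume `X n → X∞ ∈ {0,1}` a.s., and there are `q > 0` and integers
`d i ≥ 1`, not all `1`, with `f i n x ≤ q * x ^ d i` on `(0,1)`. Then for every
`0 ≤ β < Λ = (1/ℓ) ∑ᵢ log_ℓ (d i)` we have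
`P(X n < 2^(−ℓ^(βn))) → P(X∞ = 0)`. -/
theorem polarization_rate_lower
    {Ω : Type*} [MeasureSpace Ω] [IsProbabilityMeasure (ℙ : Measure Ω)]
    (ℓ : ℕ) (hℓ : 2 ≤ ℓ)
    (B : ℕ → Ω → Fin ℓ) (hBmeas : ∀ n, Measurable (B n))
    (hBindep : iIndepFun B ℙ)
    (hBunif : ∀ n (i : Fin ℓ), ℙ {ω | B n ω = i} = 1 / ℓ)
    (f : Fin ℓ → ℕ → ℝ → ℝ)
    (hf : ∀ i n, ∀ x ∈ Set.Ioo (0:ℝ) 1, f i n x ∈ Set.Ioo (0:ℝ) 1)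
    (X : ℕ → Ω → ℝ) (hXmeas : ∀ n, Measurable (X n))
    (hX0 : ∀ ω, X 0 ω ∈ Set.Ioo (0:ℝ) 1)
    (hX0indep : Indep (MeasurableSpace.comap (X 0) inferInstance)
      (⨆ n, MeasurableSpace.comap (B n) inferInstance) ℙ)
    (hXrec : ∀ n ω, X (n+1) ω = f (B n ω) n (X n ω))
    (Xinf : Ω → ℝ) (hXinfMeas : Measurable Xinf)
    (hXinfVals : ∀ᵐ ω ∂ℙ, Xinf ω = 0 ∨ Xinf ω = 1)
    (hXconv : ∀ᵐ ω ∂ℙ, Tendsto (fun n => X n ω) atTop (𝓝 (Xinf ω)))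
    (q : ℝ) (hq : 0 < q) (d : Fin ℓ → ℕ) (hd : ∀ i, 1 ≤ d i)
    (hdne : ¬ (∀ i, d i = 1))
    (hfd : ∀ i n, ∀ x ∈ Set.Ioo (0:ℝ) 1, f i n x ≤ q * x ^ d i) :
    ∀ β : ℝ, 0 ≤ β → β < (1 / (ℓ : ℝ)) * ∑ i, Real.logb ℓ (d i) →
      Tendsto (fun n : ℕ => ℙ {ω | X n ω < (2 : ℝ) ^ (-(ℓ : ℝ) ^ (β * n))})
        atTop (𝓝 (ℙ {ω | Xinf ω = 0})) :=
  polarization_rate_lower_general ℓ hℓ B hBmeas hBindep hBunif f hf X hXmeas hX0 hXrec Xinf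
    hXinfMeas hXinfVals hXconv q hq d hd hfd
end

section
/- Under the stated assumptions, for every fixed ρ ∈ (0,1), lim_{n→∞} P(X_n ≤ ρⁿ) = P(X_∞ = 0). -/
open MeasureTheory ProbabilityTheory Filter Topology Finset

/-!
On the event `X∞ = 0`, pass to `Lₙ = log Xₙ`: the bound `f i n x ≤ q x^{dᵢ}` becomes
`Lₙ₊₁ ≤ log q + d_{Bₙ} Lₙ`. Once `Lₙ ≤ -s`, each step lowers `L` by at least `s (d_{Bₙ} - 1)`
up to the constant `log q`, and by the strong law of large numbers the excess degrees
`d_{Bₖ} - 1` add up to a positive multiple of `n`. Taking `s` large makes `Lₙ / n → -∞`,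
so `Xₙ ≤ ρⁿ` eventually. On the event `X∞ ≠ 0` the limit is positive while `ρⁿ → 0`.
Hence `1{Xₙ ≤ ρⁿ} → 1{X∞ = 0}` almost surely, and the probabilities converge.
-/

theorem sub_sum_range_le_of_le_add {L u : ℕ → ℝ} {m : ℕ}
    (h : ∀ n ≥ m, L (n + 1) ≤ L n + u n) {n : ℕ} (hn : m ≤ n) :
    L n - ∑ k ∈ range n, u k ≤ L m - ∑ k ∈ range m, u k :=
  antitoneOn_nat_Ici_of_succ_le (f := fun n => L n - ∑ k ∈ range n, u k)
    (fun n hmn => by simp only [sum_range_succ]; linarith [h n hmn])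
    Set.self_mem_Ici hn hn

theorem eventually_mul_le_of_tendsto_div {u : ℕ → ℝ} {μ δ : ℝ}
    (hu : Tendsto (fun n : ℕ => u n / n) atTop (𝓝 μ)) (hδ : δ < μ) :
    ∀ᶠ n : ℕ in atTop, δ * n ≤ u n := by
  filter_upwards [hu.eventually (eventually_gt_nhds hδ), eventually_gt_atTop 0] with n hn hn0
  exact ((lt_div_iff₀ (Nat.cast_pos.2 hn0)).1 hn).le

theorem eventually_le_mul_of_le_add_mul {L e : ℕ → ℝ} {a δ : ℝ} (hL : Tendsto L atTop atBot)
    (he : ∀ n, 1 ≤ e n) (hrec : ∀ n, L (n + 1) ≤ a + e n * L n) (hδ : 0 < δ)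
    (hexcess : ∀ᶠ n : ℕ in atTop, δ * n ≤ ∑ k ∈ range n, (e k - 1)) (c : ℝ) :
    ∀ᶠ n : ℕ in atTop, L n ≤ c * n := by
  set s := max 0 ((a - c + 1) / δ)
  have hs0 : 0 ≤ s := le_max_left _ _
  have hs : a - c + 1 ≤ s * δ := (div_le_iff₀ hδ).1 (le_max_right _ _)
  obtain ⟨m, hm⟩ := (hL.eventually_le_atBot (-s)).exists_forall_of_atTop
  have hstep : ∀ n ≥ m, L (n + 1) ≤ L n + (a - s * (e n - 1)) := fun n hn => by
    nlinarith [hrec n, hm n hn, he n]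
  filter_upwards [hexcess, eventually_ge_atTop m,
    eventually_ge_atTop ⌈L m - ∑ k ∈ range m, (a - s * (e k - 1))⌉₊] with n hn hmn hKn
  have hK := sub_sum_range_le_of_le_add hstep hmn
  rw [sum_sub_distrib, sum_const, card_range, nsmul_eq_mul, ← mul_sum] at hK
  have hn' := Nat.ceil_le.1 hKn
  nlinarith [mul_le_mul_of_nonneg_left hn hs0]

theorem eventually_le_pow_of_le_mul_pow {x : ℕ → ℝ} {e : ℕ → ℕ} {q δ ρ : ℝ} (hq : 0 < q)
    (hx : ∀ n, 0 < x n) (hx0 : Tendsto x atTop (𝓝 0)) (he : ∀ n, 1 ≤ e n)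
    (hrec : ∀ n, x (n + 1) ≤ q * x n ^ e n) (hδ : 0 < δ)
    (hexcess : ∀ᶠ n : ℕ in atTop, δ * n ≤ ∑ k ∈ range n, ((e k : ℝ) - 1)) (hρ : 0 < ρ) :
    ∀ᶠ n in atTop, x n ≤ ρ ^ n := by
  have hlog : Tendsto (fun n => Real.log (x n)) atTop atBot :=
    Real.tendsto_log_nhdsGT_zero.comp (tendsto_nhdsWithin_iff.2 ⟨hx0, .of_forall hx⟩)
  have hlogrec : ∀ n, Real.log (x (n + 1)) ≤ Real.log q + e n * Real.log (x n) := fun n => by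
    rw [← Real.log_pow, ← Real.log_mul hq.ne' (pow_pos (hx n) _).ne']
    exact Real.log_le_log (hx _) (hrec n)
  filter_upwards [eventually_le_mul_of_le_add_mul hlog (fun n => by exact_mod_cast he n) hlogrec
    hδ hexcess (Real.log ρ)] with n hn
  rwa [mul_comm, ← Real.log_pow, Real.log_le_log_iff (hx n) (pow_pos hρ n)] at hn

theorem ae_tendsto_average_comp {Ω α : Type*} {mΩ : MeasurableSpace Ω} {μ : Measure Ω}
    [IsFiniteMeasure μ] [MeasurableSpace α] [DiscreteMeasurableSpace α] [Finite α]
    {B : ℕ → Ω → α} (hind : iIndepFun B μ) (hid : ∀ n, IdentDistrib (B n) (B 0) μ μ)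
    (g : α → ℝ) :
    ∀ᵐ ω ∂μ, Tendsto (fun n : ℕ => (∑ k ∈ range n, g (B k ω)) / n) atTop (𝓝 μ[g ∘ B 0]) :=
  strong_law_ae_real (fun n => g ∘ B n)
    (Integrable.of_finite.comp_aemeasurable (hid 0).aemeasurable_fst)
    (fun _ _ hij => (hind.indepFun hij).comp .of_discrete .of_discrete)
    (fun n => (hid n).comp .of_discrete)

theorem identDistrib_of_measure_eq_singleton_s3 {Ω Ω' α : Type*} {mΩ : MeasurableSpace Ω}
    {mΩ' : MeasurableSpace Ω'} {μ : Measure Ω} {ν : Measure Ω'} [MeasurableSpace α]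
    [Countable α] [MeasurableSingletonClass α] {B : Ω → α} {C : Ω' → α}
    (hB : Measurable B) (hC : Measurable C) (h : ∀ i, μ {ω | B ω = i} = ν {ω | C ω = i}) :
    IdentDistrib B C μ ν :=
  ⟨hB.aemeasurable, hC.aemeasurable, Measure.ext_of_singleton fun i => by
    rw [Measure.map_apply hB (measurableSet_singleton i),
      Measure.map_apply hC (measurableSet_singleton i)]
    exact h i⟩

theorem integral_comp_pos {Ω α : Type*} {mΩ : MeasurableSpace Ω} {μ : Measure Ω}
    [IsFiniteMeasure μ] [MeasurableSpace α] [DiscreteMeasurableSpace α] [Finite α]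
    {B : Ω → α} {g : α → ℝ} {i : α} (hg : 0 ≤ g) (hgi : g i ≠ 0) (hB : Measurable B)
    (hi : 0 < μ {ω | B ω = i}) :
    0 < μ[g ∘ B] := by
  rw [integral_pos_iff_support_of_nonneg (f := g ∘ B) (fun ω => hg (B ω))
    (Integrable.of_finite.comp_aemeasurable hB.aemeasurable)]
  exact hi.trans_le (measure_mono fun ω (hω : B ω = i) => by simpa [hω] using hgi)

theorem exponential_decay_any_base_general
    {Ω : Type*} [MeasureSpace Ω] [IsProbabilityMeasure (ℙ : Measure Ω)]
    (ℓ : ℕ)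
    (B : ℕ → Ω → Fin ℓ) (hBmeas : ∀ n, Measurable (B n))
    (hBindep : iIndepFun B ℙ)
    (hBunif : ∀ n (i : Fin ℓ), ℙ {ω | B n ω = i} = 1 / ℓ)
    (f : Fin ℓ → ℕ → ℝ → ℝ)
    (hf : ∀ i n, ∀ x ∈ Set.Ioo (0:ℝ) 1, f i n x ∈ Set.Ioo (0:ℝ) 1)
    (X : ℕ → Ω → ℝ) (hXmeas : ∀ n, Measurable (X n))
    (hX0 : ∀ ω, X 0 ω ∈ Set.Ioo (0:ℝ) 1)
    (hXrec : ∀ n ω, X (n+1) ω = f (B n ω) n (X n ω))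
    (Xinf : Ω → ℝ) (hXinfMeas : Measurable Xinf)
    (hXconv : ∀ᵐ ω ∂ℙ, Tendsto (fun n => X n ω) atTop (𝓝 (Xinf ω)))
    (q : ℝ) (hq : 0 < q) (d : Fin ℓ → ℕ) (hd : ∀ i, 1 ≤ d i)
    (hdne : ¬ (∀ i, d i = 1))
    (hfd : ∀ i n, ∀ x ∈ Set.Ioo (0:ℝ) 1, f i n x ≤ q * x ^ d i) :
    ∀ ρ : ℝ, ρ ∈ Set.Ioo (0:ℝ) 1 →
      Tendsto (fun n : ℕ => ℙ {ω | X n ω ≤ ρ ^ n})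
        atTop (𝓝 (ℙ {ω | Xinf ω = 0})) := by
  rintro ρ ⟨hρ0, hρ1⟩
  obtain ⟨i₀, hi₀⟩ := not_forall.1 hdne
  have hX : ∀ n ω, X n ω ∈ Set.Ioo (0:ℝ) 1 := by
    intro n
    induction n with
    | zero => exact hX0
    | succ n ih => intro ω; rw [hXrec]; exact hf _ _ _ (ih ω)
  have hlaw : ∀ n, IdentDistrib (B n) (B 0) ℙ ℙ := fun n =>
    identDistrib_of_measure_eq_singleton_s3 (hBmeas n) (hBmeas 0)
      fun i => (hBunif n i).trans (hBunif 0 i).symm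
  set excess : Fin ℓ → ℝ := fun i => (d i : ℝ) - 1
  have hmean : 0 < ℙ[excess ∘ B 0] :=
    integral_comp_pos (fun i => by simpa [excess] using hd i)
      (by simpa [excess, sub_eq_zero] using hi₀) (hBmeas 0)
      (by rw [hBunif]; exact ENNReal.div_pos one_ne_zero (ENNReal.natCast_ne_top ℓ))
  refine tendsto_measure_of_ae_tendsto_indicator_of_isFiniteMeasure atTop
    (hXinfMeas (measurableSet_singleton 0))
    (fun n => measurableSet_le (hXmeas n) measurable_const) ?_
  filter_upwards [hXconv, ae_tendsto_average_comp hBindep hlaw excess] with ω hconv hexcess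
  by_cases h0 : Xinf ω = 0
  · rw [h0] at hconv
    filter_upwards [eventually_le_pow_of_le_mul_pow hq (fun n => (hX n ω).1) hconv (fun _ => hd _)
      (fun n => by rw [hXrec]; exact hfd _ _ _ (hX n ω)) (half_pos hmean)
      (eventually_mul_le_of_tendsto_div hexcess (half_lt_self hmean)) hρ0] with n hn
    simp [hn, h0]
  · have hpos : 0 < Xinf ω := (ge_of_tendsto' hconv fun n => (hX n ω).1.le).lt_of_ne' h0
    filter_upwards [(tendsto_pow_atTop_nhds_zero_of_lt_one hρ0.le hρ1).eventually_lt hconv hpos]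
      with n hn
    simp [h0, hn.not_ge]

/-- **Proposition `CnToXinf`.**
Let `X` be a `(0,1)`-valued process driven by i.i.d. uniform choices `B n : Fin ℓ` via
deterministic maps `f i n : (0,1) → (0,1)`, i.e. `X (n+1) = f (B n) n (X n)`, with `X 0`
independent of `(B n)`. Assume `X n → X∞ ∈ {0,1}` a.s., and there are `q > 0` and integers
`d i ≥ 1`, not all `1`, with `f i n x ≤ q * x ^ d i` on `(0,1)`. Then for every fixed
`ρ ∈ (0,1)` we have `P(X n ≤ ρ^n) → P(X∞ = 0)`. -/
theorem exponential_decay_any_base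
    {Ω : Type*} [MeasureSpace Ω] [IsProbabilityMeasure (ℙ : Measure Ω)]
    (ℓ : ℕ) (hℓ : 2 ≤ ℓ)
    (B : ℕ → Ω → Fin ℓ) (hBmeas : ∀ n, Measurable (B n))
    (hBindep : iIndepFun B ℙ)
    (hBunif : ∀ n (i : Fin ℓ), ℙ {ω | B n ω = i} = 1 / ℓ)
    (f : Fin ℓ → ℕ → ℝ → ℝ)
    (hf : ∀ i n, ∀ x ∈ Set.Ioo (0:ℝ) 1, f i n x ∈ Set.Ioo (0:ℝ) 1)
    (X : ℕ → Ω → ℝ) (hXmeas : ∀ n, Measurable (X n))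
    (hX0 : ∀ ω, X 0 ω ∈ Set.Ioo (0:ℝ) 1)
    (hX0indep : Indep (MeasurableSpace.comap (X 0) inferInstance)
      (⨆ n, MeasurableSpace.comap (B n) inferInstance) ℙ)
    (hXrec : ∀ n ω, X (n+1) ω = f (B n ω) n (X n ω))
    (Xinf : Ω → ℝ) (hXinfMeas : Measurable Xinf)
    (hXinfVals : ∀ᵐ ω ∂ℙ, Xinf ω = 0 ∨ Xinf ω = 1)
    (hXconv : ∀ᵐ ω ∂ℙ, Tendsto (fun n => X n ω) atTop (𝓝 (Xinf ω)))
    (q : ℝ) (hq : 0 < q) (d : Fin ℓ → ℕ) (hd : ∀ i, 1 ≤ d i)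
    (hdne : ¬ (∀ i, d i = 1))
    (hfd : ∀ i n, ∀ x ∈ Set.Ioo (0:ℝ) 1, f i n x ≤ q * x ^ d i) :
    ∀ ρ : ℝ, ρ ∈ Set.Ioo (0:ℝ) 1 →
      Tendsto (fun n : ℕ => ℙ {ω | X n ω ≤ ρ ^ n})
        atTop (𝓝 (ℙ {ω | Xinf ω = 0})) :=
  exponential_decay_any_base_general ℓ B hBmeas hBindep hBunif f hf X hXmeas hX0 hXrec Xinf
    hXinfMeas hXconv q hq d hd hdne hfd
end

section
/- Suppose in addition that m ≥ 1, and let γ ∈ (0,1), Λ ≥ 0 and ε > 0 be given. If L_m ≤ −(ε·m + ζ·(n−m)) (equivalently, L_m ≤ m·log₂ρ where log₂ρ = −(ε + ζ·(n−m)/m)) and S_{m,n} ≥ γ·Λ·(n−m), then L_n ≤ −ℓ^{γ·Λ·(n−m)}·ε·m. -/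
/-
Shifting by the remaining additive budget, `M k = L k + ζ (n - k)`, removes the affine term:
since `D k ≥ 1` and `ζ ≥ 0`, the recursion gives `M (k+1) ≤ D k · M k`. Hence
`L n = M n ≤ (∏ D) · M m ≤ -(∏ D) ε m`, and `∏ D = ℓ ^ S_{m,n} ≥ ℓ ^ (γ Λ (n - m))`.
-/

open Finset

theorem le_prod_Ico_mul_of_succ_le_mul {R : Type*} [CommSemiring R] [PartialOrder R]
    [IsOrderedRing R] {M D : ℕ → R} {m n : ℕ} (hmn : m ≤ n)
    (hD : ∀ i, m ≤ i → i < n → 0 ≤ D i) (hM : ∀ i, m ≤ i → i < n → M (i + 1) ≤ D i * M i) :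
    M n ≤ (∏ i ∈ Ico m n, D i) * M m := by
  induction n, hmn using Nat.le_induction with
  | base => simp
  | succ k hmk ih =>
    calc M (k + 1) ≤ D k * M k := hM k hmk k.lt_succ_self
      _ ≤ D k * ((∏ i ∈ Ico m k, D i) * M m) :=
        mul_le_mul_of_nonneg_left
          (ih (fun i hi hik => hD i hi (hik.trans k.lt_succ_self))
            fun i hi hik => hM i hi (hik.trans k.lt_succ_self))
          (hD k hmk k.lt_succ_self)
      _ = (∏ i ∈ Ico m (k + 1), D i) * M m := by rw [prod_Ico_succ_top hmk]; ring

theorem affine_step_add_le_mul {d x ζ s : ℝ} (hd : 1 ≤ d) (hζ : 0 ≤ ζ) (hs : 0 ≤ s) :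
    d * x + ζ + ζ * (s - 1) ≤ d * (x + ζ * s) := by
  nlinarith [mul_nonneg (mul_nonneg hζ hs) (sub_nonneg.2 hd)]

theorem rpow_le_prod_of_le_sum_logb {b : ℝ} (hb : 1 < b) {ι : Type*} {s : Finset ι} {f : ι → ℝ}
    {x : ℝ} (hf : ∀ i ∈ s, 0 < f i) (hx : x ≤ ∑ i ∈ s, Real.logb b (f i)) :
    b ^ x ≤ ∏ i ∈ s, f i := by
  rw [← Real.logb_prod s f fun i hi => (hf i hi).ne'] at hx
  exact (Real.le_logb_iff_rpow_le hb (prod_pos hf)).1 hx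

theorem bootstrapping_bound_general
    (ℓ : ℕ) (hℓ : 2 ≤ ℓ) (ζ : ℝ) (hζ : 0 ≤ ζ)
    (m n : ℕ) (hmn : m < n)
    (D : ℕ → ℝ) (hD : ∀ i, m ≤ i → i < n → 1 ≤ D i)
    (L : ℕ → ℝ) (hL : ∀ i, m ≤ i → i < n → L (i + 1) = D i * L i + ζ)
    (γ Λ ε : ℝ) (hε : 0 < ε)
    (hLm : L m ≤ -(ε * m + ζ * ((n : ℝ) - m)))
    (hS : γ * Λ * ((n : ℝ) - m) ≤ ∑ i ∈ Finset.Ico m n, Real.logb ℓ (D i)) :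
    L n ≤ -(ℓ : ℝ) ^ (γ * Λ * ((n : ℝ) - m)) * ε * m := by
  have hℓ1 : (1 : ℝ) < ℓ := by exact_mod_cast hℓ
  have hDpos : ∀ i ∈ Ico m n, 0 < D i := fun i hi =>
    zero_lt_one.trans_le (hD i (mem_Ico.1 hi).1 (mem_Ico.1 hi).2)
  set M : ℕ → ℝ := fun k => L k + ζ * ((n : ℝ) - k) with hM_def
  have hstep : ∀ i, m ≤ i → i < n → M (i + 1) ≤ D i * M i := by
    intro i hmi hin
    have hni : (0 : ℝ) ≤ n - i := sub_nonneg.2 (by exact_mod_cast hin.le)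
    have := affine_step_add_le_mul (x := L i) (hD i hmi hin) hζ hni
    simp only [hM_def, hL i hmi hin, Nat.cast_succ]
    linarith
  have hMn : L n ≤ (∏ i ∈ Ico m n, D i) * M m := by
    simpa [hM_def] using le_prod_Ico_mul_of_succ_le_mul hmn.le
      (fun i hmi hin => zero_le_one.trans (hD i hmi hin)) hstep
  have hprod : (ℓ : ℝ) ^ (γ * Λ * ((n : ℝ) - m)) ≤ ∏ i ∈ Ico m n, D i :=
    rpow_le_prod_of_le_sum_logb hℓ1 hDpos hS
  have hMm : M m ≤ -(ε * m) := by simp only [hM_def]; linarith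
  have hεm : 0 ≤ ε * m := mul_nonneg hε.le m.cast_nonneg
  calc L n ≤ (∏ i ∈ Ico m n, D i) * -(ε * m) :=
        hMn.trans (mul_le_mul_of_nonneg_left hMm (prod_nonneg fun i hi => (hDpos i hi).le))
    _ ≤ (ℓ : ℝ) ^ (γ * Λ * ((n : ℝ) - m)) * -(ε * m) :=
        mul_le_mul_of_nonpos_right hprod (neg_nonpos.2 hεm)
    _ = -(ℓ : ℝ) ^ (γ * Λ * ((n : ℝ) - m)) * ε * m := by ring

/-- **Lemma 3 (bootstrapping bound).**
Let `ℓ ≥ 2`, `ζ ≥ 0`, `1 ≤ m < n`, `D i ≥ 1` for `m ≤ i < n`, and let `L` satisfy the affine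
recursion `L (i+1) = D i * L i + ζ` for `m ≤ i ≤ n−1`.  If `L m ≤ −(ε·m + ζ·(n−m))` and
`S_{m,n} = ∑_{i=m}^{n−1} log_ℓ (D i) ≥ γ·Λ·(n−m)`, then
`L n ≤ −ℓ^(γ·Λ·(n−m))·ε·m`. -/
theorem bootstrapping_bound
    (ℓ : ℕ) (hℓ : 2 ≤ ℓ) (ζ : ℝ) (hζ : 0 ≤ ζ)
    (m n : ℕ) (hm : 1 ≤ m) (hmn : m < n)
    (D : ℕ → ℝ) (hD : ∀ i, m ≤ i → i < n → 1 ≤ D i)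
    (L : ℕ → ℝ) (hL : ∀ i, m ≤ i → i < n → L (i + 1) = D i * L i + ζ)
    (γ Λ ε : ℝ) (hγ : γ ∈ Set.Ioo (0:ℝ) 1) (hΛ : 0 ≤ Λ) (hε : 0 < ε)
    (hLm : L m ≤ -(ε * m + ζ * ((n : ℝ) - m)))
    (hS : γ * Λ * ((n : ℝ) - m) ≤ ∑ i ∈ Finset.Ico m n, Real.logb ℓ (D i)) :
    L n ≤ -(ℓ : ℝ) ^ (γ * Λ * ((n : ℝ) - m)) * ε * m :=
  bootstrapping_bound_general ℓ hℓ ζ hζ m n hmn D hD L hL γ Λ ε hε hLm hS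
end

section
/- For every u₁ ∈ {0,1} and every pair x ≠ x' in {0,1}×{0,1}, the Bhattacharyya parameter of the glued split channel satisfies Z_{x,x'}(W^{(2,3)}_{u₁}) := Σ_{y∈Y⁴} √(W^{(2,3)}_{u₁}(x)(y)·W^{(2,3)}_{u₁}(x')(y)) ≤ 2·Z(W)^{D_{x,x'}(u₁)}. -/
/-!
The Bhattacharyya coefficient `∑ y, √(P y · Q y)` is multiplicative on product distributions
and, as `√` is subadditive, subadditive in each argument. Per letter, the coefficient of
`W(b), W(b')` is `1` if `b = b'` and `Z(W)` otherwise, so two codewords `c, c'` sent through `W⁴`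
have coefficient `Z(W) ^ d_H(c, c')`. Expanding both mixtures over `u₄` and `v₄` bounds the
glued channel's coefficient by `½ ∑_{u₄, v₄} Z(W) ^ d_H ≤ ½ · 4 · Z(W) ^ D`, since `Z(W) ≤ 1`.
-/

open Finset

theorem Real.sqrt_sum_le_sum_sqrt {ι : Type*} (s : Finset ι) {f : ι → ℝ}
    (hf : ∀ i ∈ s, 0 ≤ f i) : √(∑ i ∈ s, f i) ≤ ∑ i ∈ s, √(f i) := by
  refine Real.sqrt_le_iff.2 ⟨sum_nonneg fun _ _ => Real.sqrt_nonneg _, ?_⟩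
  calc ∑ i ∈ s, f i = ∑ i ∈ s, √(f i) ^ 2 :=
        sum_congr rfl fun i hi => (Real.sq_sqrt (hf i hi)).symm
    _ ≤ (∑ i ∈ s, √(f i)) ^ 2 := sum_sq_le_sq_sum_of_nonneg fun _ _ => Real.sqrt_nonneg _

noncomputable section

variable {Y : Type*} [Fintype Y]

def bhattacharyyaCoeff (P Q : Y → ℝ) : ℝ := ∑ y, √(P y * Q y)

def bhattacharyya (W : Bool → Y → ℝ) : ℝ := bhattacharyyaCoeff (W false) (W true)

section

variable {P Q : Y → ℝ}

theorem bhattacharyyaCoeff_nonneg : 0 ≤ bhattacharyyaCoeff P Q :=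
  sum_nonneg fun _ _ => Real.sqrt_nonneg _

theorem bhattacharyyaCoeff_comm : bhattacharyyaCoeff P Q = bhattacharyyaCoeff Q P := by
  simp only [bhattacharyyaCoeff, mul_comm]

theorem bhattacharyyaCoeff_self (hP : ∀ y, 0 ≤ P y) : bhattacharyyaCoeff P P = ∑ y, P y :=
  sum_congr rfl fun y _ => Real.sqrt_mul_self (hP y)

theorem bhattacharyyaCoeff_le_sqrt_mul_sqrt (hP : ∀ y, 0 ≤ P y) (hQ : ∀ y, 0 ≤ Q y) :
    bhattacharyyaCoeff P Q ≤ √(∑ y, P y) * √(∑ y, Q y) := by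
  simpa only [bhattacharyyaCoeff, Real.sqrt_mul (hP _)] using
    Real.sum_sqrt_mul_sqrt_le univ hP hQ

theorem bhattacharyyaCoeff_const_mul (c : ℝ) :
    bhattacharyyaCoeff (fun y => c * P y) (fun y => c * Q y) = |c| * bhattacharyyaCoeff P Q := by
  simp only [bhattacharyyaCoeff, mul_sum]
  refine sum_congr rfl fun y _ => ?_
  rw [mul_mul_mul_comm, ← sq, Real.sqrt_mul (sq_nonneg c), Real.sqrt_sq_eq_abs]

end

theorem bhattacharyyaCoeff_sum_le {α β : Type*} (s : Finset α) (t : Finset β)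
    {P : α → Y → ℝ} {Q : β → Y → ℝ}
    (hP : ∀ a y, 0 ≤ P a y) (hQ : ∀ b y, 0 ≤ Q b y) :
    bhattacharyyaCoeff (fun y => ∑ a ∈ s, P a y) (fun y => ∑ b ∈ t, Q b y)
      ≤ ∑ a ∈ s, ∑ b ∈ t, bhattacharyyaCoeff (P a) (Q b) := by
  calc ∑ y, √((∑ a ∈ s, P a y) * ∑ b ∈ t, Q b y)
      ≤ ∑ y, ∑ a ∈ s, ∑ b ∈ t, √(P a y * Q b y) := sum_le_sum fun y _ => by
        simp only [sum_mul_sum, ← sum_product']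
        exact Real.sqrt_sum_le_sum_sqrt _ fun p _ => mul_nonneg (hP _ _) (hQ _ _)
    _ = ∑ a ∈ s, ∑ b ∈ t, ∑ y, √(P a y * Q b y) := by
        rw [sum_comm]
        exact sum_congr rfl fun a _ => sum_comm

theorem bhattacharyyaCoeff_pi {ι : Type*} [Fintype ι] [DecidableEq ι] {P Q : ι → Y → ℝ}
    (hP : ∀ i y, 0 ≤ P i y) (hQ : ∀ i y, 0 ≤ Q i y) :
    bhattacharyyaCoeff (fun y : ι → Y => ∏ i, P i (y i)) (fun y => ∏ i, Q i (y i))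
      = ∏ i, bhattacharyyaCoeff (P i) (Q i) := by
  simp only [bhattacharyyaCoeff, Fintype.prod_sum, ← prod_mul_distrib]
  exact sum_congr rfl fun y _ => Real.sqrt_prod _ fun i _ => mul_nonneg (hP _ _) (hQ _ _)

variable {W : Bool → Y → ℝ}

theorem bhattacharyya_nonneg : 0 ≤ bhattacharyya W := bhattacharyyaCoeff_nonneg

theorem bhattacharyya_le_one (hW : ∀ b y, 0 ≤ W b y) (hWsum : ∀ b, ∑ y, W b y = 1) :
    bhattacharyya W ≤ 1 :=
  (bhattacharyyaCoeff_le_sqrt_mul_sqrt (hW false) (hW true)).trans_eq (by simp [hWsum])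

theorem bhattacharyyaCoeff_channel_eq (hW : ∀ b y, 0 ≤ W b y) (hWsum : ∀ b, ∑ y, W b y = 1)
    (b b' : Bool) :
    bhattacharyyaCoeff (W b) (W b') = if b = b' then 1 else bhattacharyya W := by
  cases b <;> cases b' <;>
    simp [bhattacharyya, bhattacharyyaCoeff_self (hW _), hWsum, bhattacharyyaCoeff_comm]

theorem bhattacharyyaCoeff_channel_pi_eq_pow_hammingDist {ι : Type*} [Fintype ι] [DecidableEq ι]
    (hW : ∀ b y, 0 ≤ W b y) (hWsum : ∀ b, ∑ y, W b y = 1) (c c' : ι → Bool) :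
    bhattacharyyaCoeff (fun y : ι → Y => ∏ i, W (c i) (y i)) (fun y => ∏ i, W (c' i) (y i))
      = bhattacharyya W ^ hammingDist c c' := by
  rw [bhattacharyyaCoeff_pi (fun i => hW (c i)) (fun i => hW (c' i))]
  simp only [bhattacharyyaCoeff_channel_eq hW hWsum, prod_ite, prod_const_one, prod_const, one_mul]
  simp [hammingDist]

end

theorem glued_split_channel_bhattacharyya_upper_general
    {Y : Type*} [Fintype Y]
    (W : Bool → Y → ℝ) (hWnn : ∀ b y, 0 ≤ W b y)
    (hWsum : ∀ b, ∑ y, W b y = 1)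
    (g : Bool → Bool × Bool → Bool → (Fin 4 → Bool)) :
    ∀ (u₁ : Bool) (x x' : Bool × Bool), x ≠ x' →
      ∑ y : Fin 4 → Y,
          Real.sqrt ((((1 : ℝ) / 2) * ∑ u₄ : Bool, ∏ i, W (g u₁ x u₄ i) (y i)) *
            (((1 : ℝ) / 2) * ∑ v₄ : Bool, ∏ i, W (g u₁ x' v₄ i) (y i)))
        ≤ 2 * (∑ y, Real.sqrt (W false y * W true y)) ^
            (Finset.univ.inf' Finset.univ_nonempty
              (fun p : Bool × Bool => hammingDist (g u₁ x p.1) (g u₁ x' p.2))) := by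
  intro u₁ x x' _
  set D := univ.inf' univ_nonempty
    (fun p : Bool × Bool => hammingDist (g u₁ x p.1) (g u₁ x' p.2))
  have hword : ∀ (c : Fin 4 → Bool) (y : Fin 4 → Y), 0 ≤ ∏ i, W (c i) (y i) := fun c y =>
    prod_nonneg fun i _ => hWnn _ _
  calc bhattacharyyaCoeff (fun y : Fin 4 → Y => 1 / 2 * ∑ u₄, ∏ i, W (g u₁ x u₄ i) (y i))
        (fun y => 1 / 2 * ∑ v₄, ∏ i, W (g u₁ x' v₄ i) (y i))
      = 1 / 2 * bhattacharyyaCoeff (fun y : Fin 4 → Y => ∑ u₄, ∏ i, W (g u₁ x u₄ i) (y i))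
          (fun y => ∑ v₄, ∏ i, W (g u₁ x' v₄ i) (y i)) := by
        rw [bhattacharyyaCoeff_const_mul, abs_of_pos one_half_pos]
    _ ≤ 1 / 2 * ∑ u₄ : Bool, ∑ v₄ : Bool,
          bhattacharyya W ^ hammingDist (g u₁ x u₄) (g u₁ x' v₄) := by
        gcongr
        refine (bhattacharyyaCoeff_sum_le _ _ (fun u₄ => hword (g u₁ x u₄))
          (fun v₄ => hword (g u₁ x' v₄))).trans_eq ?_
        simp only [bhattacharyyaCoeff_channel_pi_eq_pow_hammingDist hWnn hWsum]
    _ ≤ 1 / 2 * ∑ _u₄ : Bool, ∑ _v₄ : Bool, bhattacharyya W ^ D := by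
        refine mul_le_mul_of_nonneg_left (sum_le_sum fun u₄ _ => sum_le_sum fun v₄ _ => ?_)
          one_half_pos.le
        exact pow_le_pow_of_le_one bhattacharyya_nonneg (bhattacharyya_le_one hWnn hWsum)
          (inf'_le _ (mem_univ (u₄, v₄)))
    _ = 2 * bhattacharyya W ^ D := by norm_num; ring

/-- **Upper bound on the Bhattacharyya parameter of the glued split channel**
(from the proof of Proposition 3).  For a binary-input DMC `W` with Bhattacharyya parameter
`Z(W) = ∑ y, √(W 0 y · W 1 y)`, an arbitrary kernel map `g`, and the glued split channel
`W^{(2,3)}_{u₁}(x)(y) = (1/2) ∑_{u₄} W⁴(g(u₁,x,u₄))(y)`, for every `u₁` and every `x ≠ x'`: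
`Z_{x,x'}(W^{(2,3)}_{u₁}) ≤ 2 · Z(W)^{D_{x,x'}(u₁)}`, where
`D_{x,x'}(u₁) = min_{u₄,v₄} d_H(g(u₁,x,u₄), g(u₁,x',v₄))`. -/
theorem glued_split_channel_bhattacharyya_upper
    {Y : Type*} [Fintype Y] [Nonempty Y]
    (W : Bool → Y → ℝ) (hWnn : ∀ b y, 0 ≤ W b y)
    (hWsum : ∀ b, ∑ y, W b y = 1)
    (g : Bool → Bool × Bool → Bool → (Fin 4 → Bool)) :
    ∀ (u₁ : Bool) (x x' : Bool × Bool), x ≠ x' →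
      ∑ y : Fin 4 → Y,
          Real.sqrt ((((1 : ℝ) / 2) * ∑ u₄ : Bool, ∏ i, W (g u₁ x u₄ i) (y i)) *
            (((1 : ℝ) / 2) * ∑ v₄ : Bool, ∏ i, W (g u₁ x' v₄ i) (y i)))
        ≤ 2 * (∑ y, Real.sqrt (W false y * W true y)) ^
            (Finset.univ.inf' Finset.univ_nonempty
              (fun p : Bool × Bool => hammingDist (g u₁ x p.1) (g u₁ x' p.2))) :=
  glued_split_channel_bhattacharyya_upper_general W hWnn hWsum g
end

section
/- Define the process Z̃₀ = z₀ and Z̃_{n+1} = c·(Z̃_n)^{D̆_n} for n ≥ 0. Then for every real β > E, lim_{n→∞} P( Z̃_n ≥ 2^{−ℓ^{βn}} ) = 1. -/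
open MeasureTheory ProbabilityTheory Filter Topology Finset

/-!
Writing `x n = -log Z n`, the recursion becomes `x (n+1) = -log c + D n * x n`, so
`x n ≤ (n K + L) ∏_{k<n} D k` with `K = -log c`, `L = -log z₀`. Outside the finitely many
indices `n ≤ T` the spliced sequence agrees with `D2`, so by the strong law of large numbers
`log_ℓ ∏_{k<n} D k = (E + o(1)) n` almost surely. Hence, for `E < γ < β`, almost surely
`x n ≤ (n K + L) ℓ^{γ n} ≤ log 2 · ℓ^{β n}` for large `n`, which is `Z n ≥ 2^{-ℓ^{β n}}`;
almost sure eventual occurrence forces the probabilities to tend to `1`.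
-/

theorem tendsto_measure_of_ae_eventually_mem {α : Type*} [MeasurableSpace α] {μ : Measure α}
    [IsProbabilityMeasure μ] {s : ℕ → Set α} (h : ∀ᵐ x ∂μ, ∀ᶠ n in atTop, x ∈ s n) :
    Tendsto (fun n => μ (s n)) atTop (𝓝 1) := by
  set t : ℕ → Set α := fun N => ⋂ m ≥ N, s m
  have ht : Monotone t := fun N N' hN =>
    Set.biInter_mono (fun m (hm : N' ≤ m) => hN.trans hm) fun _ _ => subset_rfl
  have hunion : μ (⋃ N, t N) = 1 := by
    rw [← measure_univ (μ := μ)]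
    refine measure_congr (ae_eq_univ.2 (ae_iff.1 ?_))
    filter_upwards [h] with x hx
    obtain ⟨N, hN⟩ := eventually_atTop.1 hx
    exact Set.mem_iUnion.2 ⟨N, Set.mem_iInter₂.2 hN⟩
  refine tendsto_of_tendsto_of_tendsto_of_le_of_le (hunion ▸ tendsto_measure_iUnion_atTop ht)
    tendsto_const_nhds (fun n => measure_mono (Set.biInter_subset_of_mem le_rfl))
    (fun _ => prob_le_one)

theorem integrable_comp_of_forall_mem_finset {Ω β : Type*} [MeasurableSpace Ω] [MeasurableSpace β]
    [Countable β] [MeasurableSingletonClass β] {μ : Measure Ω} [IsFiniteMeasure μ]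
    {X : Ω → β} (hX : AEMeasurable X μ) (S : Finset β) (hXS : ∀ ω, X ω ∈ S) (f : β → ℝ) :
    Integrable (fun ω => f (X ω)) μ :=
  Integrable.of_bound ((measurable_of_countable f).comp_aemeasurable hX).aestronglyMeasurable
    (∑ k ∈ S, ‖f k‖) (ae_of_all _ fun ω => single_le_sum (fun k _ => norm_nonneg (f k)) (hXS ω))

theorem Filter.Tendsto.cesaro_congr {u v : ℕ → ℝ} {E : ℝ} (huv : u =ᶠ[atTop] v)
    (hu : Tendsto (fun n : ℕ => (∑ k ∈ range n, u k) / n) atTop (𝓝 E)) :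
    Tendsto (fun n : ℕ => (∑ k ∈ range n, v k) / n) atTop (𝓝 E) := by
  obtain ⟨N, hN⟩ := eventually_atTop.1 huv
  set C := ∑ k ∈ range N, (v k - u k)
  have hsum : ∀ n ≥ N, ∑ k ∈ range n, v k = ∑ k ∈ range n, u k + C := by
    intro n hn
    rw [← sub_eq_iff_eq_add', ← sum_sub_distrib, ← sum_range_add_sum_Ico _ hn,
      sum_eq_zero fun k hk => sub_eq_zero.2 (hN k (mem_Ico.1 hk).1).symm, add_zero]
  have hlim := hu.add (tendsto_const_div_atTop_nhds_zero_nat C)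
  rw [add_zero] at hlim
  refine hlim.congr' (eventually_atTop.2 ⟨N, fun n hn => ?_⟩)
  simp only [hsum n hn, add_div]

theorem le_mul_prod_of_le_add_mul {x d : ℕ → ℝ} {K L : ℝ} (hK : 0 ≤ K) (hd : ∀ n, 1 ≤ d n)
    (h0 : x 0 ≤ L) (hrec : ∀ n, x (n + 1) ≤ K + d n * x n) (n : ℕ) :
    x n ≤ (n * K + L) * ∏ k ∈ range n, d k := by
  induction n with
  | zero => simpa using h0
  | succ n ih =>
    have hP : 1 ≤ ∏ k ∈ range n, d k := one_le_prod fun k _ => hd k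
    calc x (n + 1) ≤ K + d n * x n := hrec n
      _ ≤ K * ((∏ k ∈ range n, d k) * d n) + d n * ((n * K + L) * ∏ k ∈ range n, d k) := by
        gcongr
        · exact le_mul_of_one_le_right hK (one_le_mul_of_one_le_of_one_le hP (hd n))
        · exact zero_le_one.trans (hd n)
      _ = ((n + 1 : ℕ) * K + L) * ∏ k ∈ range (n + 1), d k := by
        rw [prod_range_succ]; push_cast; ring

theorem eventually_prod_le_rpow_of_tendsto_cesaro {b E γ : ℝ} (hb : 1 < b) (hEγ : E < γ)
    {d : ℕ → ℝ} (hd : ∀ n, 0 < d n)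
    (h : Tendsto (fun n : ℕ => (∑ k ∈ range n, Real.logb b (d k)) / n) atTop (𝓝 E)) :
    ∀ᶠ n : ℕ in atTop, ∏ k ∈ range n, d k ≤ b ^ (γ * n) := by
  filter_upwards [h.eventually_lt_const hEγ, eventually_gt_atTop 0] with n hlt hn
  rw [← Real.logb_le_iff_le_rpow hb (prod_pos fun k _ => hd k),
    Real.logb_prod _ _ fun k _ => (hd k).ne']
  rw [div_lt_iff₀ (by exact_mod_cast hn)] at hlt
  exact hlt.le

theorem eventually_linear_mul_rpow_le {b γ β : ℝ} (hb : 1 < b) (hγβ : γ < β) (K L : ℝ) {a : ℝ}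
    (ha : 0 < a) : ∀ᶠ n : ℕ in atTop, (n * K + L) * b ^ (γ * n) ≤ a * b ^ (β * n) := by
  set r := b ^ (β - γ)
  have hr : 1 < r := Real.one_lt_rpow hb (sub_pos.2 hγβ)
  have hlim : Tendsto (fun n : ℕ => (n * K + L) / r ^ n) atTop (𝓝 0) := by
    have := ((tendsto_pow_const_div_const_pow_of_one_lt 1 hr).mul_const K).add
      ((tendsto_pow_const_div_const_pow_of_one_lt 0 hr).mul_const L)
    simp only [zero_mul, add_zero, pow_one, pow_zero] at this
    refine this.congr fun n => ?_
    ring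
  filter_upwards [hlim.eventually_lt_const ha] with n hn
  have hrn : 0 < r ^ n := pow_pos (zero_lt_one.trans hr) n
  have hbγ : 0 < b ^ (γ * n) := Real.rpow_pos_of_pos (zero_lt_one.trans hb) _
  rw [div_lt_iff₀ hrn] at hn
  calc (n * K + L) * b ^ (γ * n) ≤ a * r ^ n * b ^ (γ * n) := by gcongr
    _ = a * b ^ (β * n) := by
      rw [← Real.rpow_mul_natCast (zero_lt_one.trans hb).le, mul_assoc,
        ← Real.rpow_add (zero_lt_one.trans hb)]
      ring_nf

theorem eventually_two_rpow_neg_le {b c z₀ E β : ℝ} (hb : 1 < b) (hc : 0 < c) (hc1 : c ≤ 1)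
    (hz₀ : 0 < z₀) (hz₀1 : z₀ ≤ 1) {d : ℕ → ℕ} (hd : ∀ n, 1 ≤ d n) {z : ℕ → ℝ}
    (hz0 : z 0 = z₀) (hrec : ∀ n, z (n + 1) = c * z n ^ d n)
    (havg : Tendsto (fun n : ℕ => (∑ k ∈ range n, Real.logb b (d k)) / n) atTop (𝓝 E))
    (hEβ : E < β) :
    ∀ᶠ n : ℕ in atTop, (2 : ℝ) ^ (-b ^ (β * n)) ≤ z n := by
  obtain ⟨γ, hEγ, hγβ⟩ := exists_between hEβ
  have hpos : ∀ n, 0 < z n := fun n => by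
    induction n with
    | zero => rwa [hz0]
    | succ n ih => rw [hrec]; positivity
  have hK : 0 ≤ -Real.log c := neg_nonneg.2 (Real.log_nonpos hc.le hc1)
  have hL : 0 ≤ -Real.log z₀ := neg_nonneg.2 (Real.log_nonpos hz₀.le hz₀1)
  have hlog : ∀ n, -Real.log (z n) ≤ (n * -Real.log c + -Real.log z₀) * ∏ k ∈ range n, (d k : ℝ) :=
    le_mul_prod_of_le_add_mul hK (fun n => by exact_mod_cast hd n) (by rw [hz0])
      fun n => by rw [hrec, Real.log_mul hc.ne' (pow_pos (hpos n) _).ne', Real.log_pow]; linarith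
  filter_upwards [eventually_prod_le_rpow_of_tendsto_cesaro hb hEγ
      (fun n => by exact_mod_cast hd n) havg,
    eventually_linear_mul_rpow_le hb hγβ (-Real.log c) (-Real.log z₀) (Real.log_pos one_lt_two)]
    with n hprod hlin
  rw [Real.rpow_le_iff_le_log two_pos (hpos n)]
  calc -b ^ (β * n) * Real.log 2 = -(Real.log 2 * b ^ (β * n)) := by ring
    _ ≤ -((n * -Real.log c + -Real.log z₀) * b ^ (γ * n)) := neg_le_neg hlin
    _ ≤ -((n * -Real.log c + -Real.log z₀) * ∏ k ∈ range n, (d k : ℝ)) := by gcongr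
    _ ≤ Real.log (z n) := by linarith [hlog n]

theorem spliced_process_converse_rate_general
    {Ω : Type*} [MeasureSpace Ω] [IsProbabilityMeasure (ℙ : Measure Ω)]
    (ℓ : ℕ) (hℓ : 2 ≤ ℓ) (c z₀ : ℝ)
    (hc : c ∈ Set.Ioo (0:ℝ) 1) (hz₀ : z₀ ∈ Set.Ioo (0:ℝ) 1)
    (D1 D2 : ℕ → Ω → ℕ)
    (S : Finset ℕ) (hS1 : ∀ k ∈ S, 1 ≤ k)
    (hD1S : ∀ n ω, D1 n ω ∈ S) (hD2S : ∀ n ω, D2 n ω ∈ S)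
    (hD2indep : iIndepFun D2 ℙ)
    (hD2id : ∀ n, IdentDistrib (D2 n) (D2 0) ℙ ℙ)
    (T : Ω → ℕ)
    (Z : ℕ → Ω → ℝ) (hZ0 : ∀ ω, Z 0 ω = z₀)
    (hZrec : ∀ n ω, Z (n + 1) ω = c * Z n ω ^ (if n ≤ T ω then D1 n ω else D2 n ω)) :
    ∀ β : ℝ, (∫ ω, Real.logb ℓ (D2 0 ω) ∂ℙ) < β →
      Tendsto (fun n : ℕ => ℙ {ω | (2 : ℝ) ^ (-(ℓ : ℝ) ^ (β * n)) ≤ Z n ω})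
        atTop (𝓝 1) := by
  intro β hβ
  have hlogb : Measurable fun k : ℕ => Real.logb ℓ k := measurable_from_nat
  have hslln := strong_law_ae_real (fun i ω => Real.logb ℓ (D2 i ω))
    (integrable_comp_of_forall_mem_finset (hD2id 0).aemeasurable_fst S (hD2S 0) (fun k : ℕ => Real.logb ℓ k))
    (fun i j hij => (hD2indep.indepFun hij).comp hlogb hlogb) (fun i => (hD2id i).comp hlogb)
  refine tendsto_measure_of_ae_eventually_mem ?_
  filter_upwards [hslln] with ω hω
  refine eventually_two_rpow_neg_le (Nat.one_lt_cast.2 hℓ) hc.1 hc.2.le hz₀.1 hz₀.2.le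
    (fun n => ?_) (hZ0 ω) (hZrec · ω) (hω.cesaro_congr ?_) hβ
  · split_ifs
    exacts [hS1 _ (hD1S n ω), hS1 _ (hD2S n ω)]
  · filter_upwards [eventually_gt_atTop (T ω)] with n hn
    rw [if_neg hn.not_ge]

/-- **Equation (exponentEx2) of Proposition 4 (abstracted core): converse bound on the rate
of polarization.**  Fix `ℓ ≥ 2`, `c, z₀ ∈ (0,1)`.  Let `D1, D2` be i.i.d. integer-valued
sequences with values in a fixed finite set of integers `≥ 1`, and `T` an `ℕ`-valued random
variable independent of `(D2 n)`.  Splice `D n = D1 n` for `n ≤ T`, `D n = D2 n` for `n > T`,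
and define `Z 0 = z₀`, `Z (n+1) = c · (Z n)^(D n)`.  Then for every `β > E = E[log_ℓ (D2 0)]`,
`P(Z n ≥ 2^(−ℓ^(βn))) → 1`. -/
theorem spliced_process_converse_rate
    {Ω : Type*} [MeasureSpace Ω] [IsProbabilityMeasure (ℙ : Measure Ω)]
    (ℓ : ℕ) (hℓ : 2 ≤ ℓ) (c z₀ : ℝ)
    (hc : c ∈ Set.Ioo (0:ℝ) 1) (hz₀ : z₀ ∈ Set.Ioo (0:ℝ) 1)
    (D1 D2 : ℕ → Ω → ℕ)
    (hD1meas : ∀ n, Measurable (D1 n)) (hD2meas : ∀ n, Measurable (D2 n))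
    (S : Finset ℕ) (hS1 : ∀ k ∈ S, 1 ≤ k)
    (hD1S : ∀ n ω, D1 n ω ∈ S) (hD2S : ∀ n ω, D2 n ω ∈ S)
    (hD1indep : iIndepFun D1 ℙ)
    (hD2indep : iIndepFun D2 ℙ)
    (hD1id : ∀ n, IdentDistrib (D1 n) (D1 0) ℙ ℙ)
    (hD2id : ∀ n, IdentDistrib (D2 n) (D2 0) ℙ ℙ)
    (T : Ω → ℕ) (hTmeas : Measurable T)
    (hTindep : Indep (MeasurableSpace.comap T inferInstance)
      (⨆ n, MeasurableSpace.comap (D2 n) inferInstance) ℙ)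
    (Z : ℕ → Ω → ℝ) (hZ0 : ∀ ω, Z 0 ω = z₀)
    (hZrec : ∀ n ω, Z (n + 1) ω = c * Z n ω ^ (if n ≤ T ω then D1 n ω else D2 n ω)) :
    ∀ β : ℝ, (∫ ω, Real.logb ℓ (D2 0 ω) ∂ℙ) < β →
      Tendsto (fun n : ℕ => ℙ {ω | (2 : ℝ) ^ (-(ℓ : ℝ) ^ (β * n)) ≤ Z n ω})
        atTop (𝓝 1) :=
  spliced_process_converse_rate_general ℓ hℓ c z₀ hc hz₀ D1 D2 S hS1 hD1S hD2S hD2indep hD2id T Z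
    hZ0 hZrec
end

section
/- Under the stated assumptions, for every real β with 0 ≤ β < E₁, lim_{n→∞} P( X_n ≤ 2^{−ℓ^{βn}} ) = P(X_∞ = 0). -/
open MeasureTheory ProbabilityTheory Filter Topology

/-!
On the event `X∞ = 0` write `Xₙ = 2 ^ (-aₙ)`. After the switching time the bound `f² ≤ q x^d`
gives `aₙ₊₁ ≥ dₙ aₙ - c` with `dₙ = d²(B²ₙ)`, and since `aₙ → ∞` the constant `c` only costs a
factor `1 - c / aₙ → 1`. Hence `logb ℓ aₙ` grows by at least `logb ℓ dₙ + o(1)` per step, and the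
strong law of large numbers for the uniform second-phase choices makes `logb ℓ aₙ / n` eventually
larger than any `β < E₁`, that is `Xₙ ≤ 2 ^ (-ℓ ^ (β n))`. The first phase is finite and only
shifts the starting point. On the event `X∞ = 1` the process eventually exceeds
`1/2 ≥ 2 ^ (-ℓ ^ (β n))`.
-/

open Finset Real

lemma eventually_mul_le_of_le_sub {u v : ℕ → ℝ} {β E : ℝ}
    (hinc : ∀ᶠ n in atTop, v n ≤ u (n + 1) - u n)
    (hv : Tendsto (fun n : ℕ => (∑ k ∈ range n, v k) / n) atTop (𝓝 E)) (hβ : β < E) :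
    ∀ᶠ n : ℕ in atTop, β * n ≤ u n := by
  obtain ⟨m, hm⟩ := eventually_atTop.1 hinc
  set C := u m - ∑ k ∈ range m, v k
  have hlow : ∀ n ≥ m, C + ∑ k ∈ range n, v k ≤ u n := by
    intro n hn
    induction n, hn using Nat.le_induction with
    | base => simp [C]
    | succ n hmn ih => rw [sum_range_succ]; linarith [hm n hmn]
  have hC : Tendsto (fun n : ℕ => (C + ∑ k ∈ range n, v k) / n) atTop (𝓝 E) := by
    simpa [add_div] using (tendsto_const_div_atTop_nhds_zero_nat C).add hv
  filter_upwards [hC.eventually (eventually_gt_nhds hβ), eventually_ge_atTop m,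
    eventually_gt_atTop 0] with n hβn hmn hn
  rw [lt_div_iff₀ (by exact_mod_cast hn)] at hβn
  linarith [hlow n hmn]

lemma eventually_rpow_le_of_mul_sub_le {L β E c : ℝ} {a d : ℕ → ℝ} (hL : 1 < L) (hc : 0 ≤ c)
    (ha : Tendsto a atTop atTop) (hd : ∀ n, 1 ≤ d n)
    (hrec : ∀ᶠ n in atTop, d n * a n - c ≤ a (n + 1))
    (hS : Tendsto (fun n : ℕ => (∑ k ∈ range n, logb L (d k)) / n) atTop (𝓝 E)) (hβ : β < E) :
    ∀ᶠ n : ℕ in atTop, L ^ (β * n) ≤ a n := by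
  set e : ℕ → ℝ := fun n => logb L (1 - c / a n)
  have he : Tendsto e atTop (𝓝 0) := by
    have h1 : Tendsto (fun n => 1 - c / a n) atTop (𝓝 1) := by
      simpa using tendsto_const_nhds.sub (tendsto_const_nhds.div_atTop ha)
    have := (continuousAt_logb (b := L) one_ne_zero).tendsto.comp h1
    rwa [logb_one] at this
  have hinc : ∀ᶠ n in atTop, logb L (d n) + e n ≤ logb L (a (n + 1)) - logb L (a n) := by
    filter_upwards [hrec, ha.eventually_gt_atTop c, ha.eventually_gt_atTop 0] with n hn hca ha0
    have h1 : 0 < 1 - c / a n := by rw [sub_pos, div_lt_one ha0]; exact hca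
    have hd0 : 0 < d n := by linarith [hd n]
    have hle : d n * a n * (1 - c / a n) ≤ a (n + 1) :=
      calc d n * a n * (1 - c / a n) = d n * a n - d n * c := by field_simp
        _ ≤ d n * a n - c := by nlinarith [hd n]
        _ ≤ a (n + 1) := hn
    have := logb_le_logb_of_le hL (by positivity) hle
    rw [logb_mul (by positivity) h1.ne', logb_mul hd0.ne' ha0.ne'] at this
    linarith
  have hv : Tendsto (fun n : ℕ => (∑ k ∈ range n, (logb L (d k) + e k)) / n) atTop (𝓝 E) := by
    simpa [sum_add_distrib, div_eq_inv_mul, mul_add] using hS.add he.cesaro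
  filter_upwards [eventually_mul_le_of_le_sub (u := fun n => logb L (a n)) hinc hv hβ, ha.eventually_gt_atTop 0] with n hn ha0
  exact (le_logb_iff_rpow_le hL ha0).1 hn

lemma eventually_le_two_rpow_neg_rpow {L β E Q : ℝ} {x : ℕ → ℝ} {d : ℕ → ℕ} (hL : 1 < L)
    (hQ : 1 ≤ Q) (hx : ∀ n, 0 < x n) (hx0 : Tendsto x atTop (𝓝 0)) (hd : ∀ n, 1 ≤ d n)
    (hrec : ∀ᶠ n in atTop, x (n + 1) ≤ Q * x n ^ d n)
    (hS : Tendsto (fun n : ℕ => (∑ k ∈ range n, logb L (d k)) / n) atTop (𝓝 E)) (hβ : β < E) :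
    ∀ᶠ n : ℕ in atTop, x n ≤ 2 ^ (-L ^ (β * n)) := by
  set a : ℕ → ℝ := fun n => -logb 2 (x n)
  have ha : Tendsto a atTop atTop := by
    have hx0' : Tendsto x atTop (𝓝[>] 0) :=
      tendsto_nhdsWithin_iff.2 ⟨hx0, Eventually.of_forall hx⟩
    exact tendsto_neg_atBot_atTop.comp ((tendsto_logb_nhdsGT_zero one_lt_two).comp hx0')
  have hrec' : ∀ᶠ n in atTop, (d n : ℝ) * a n - logb 2 Q ≤ a (n + 1) := by
    filter_upwards [hrec] with n hn
    have := logb_le_logb_of_le one_lt_two (hx (n + 1)) hn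
    rw [logb_mul (by positivity) (pow_ne_zero _ (hx n).ne'), logb_pow] at this
    simp only [a]
    linarith
  filter_upwards [eventually_rpow_le_of_mul_sub_le hL (logb_nonneg one_lt_two hQ) ha
    (fun n => by exact_mod_cast hd n) hrec' hS hβ] with n hn
  rw [← logb_le_iff_le_rpow one_lt_two (hx n)]
  linarith

lemma eventually_two_rpow_neg_rpow_lt {L β : ℝ} {x : ℕ → ℝ} (hL : 1 ≤ L) (hβ : 0 ≤ β)
    (hx : Tendsto x atTop (𝓝 1)) : ∀ᶠ n : ℕ in atTop, (2 : ℝ) ^ (-L ^ (β * n)) < x n := by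
  filter_upwards [hx.eventually (eventually_gt_nhds (by norm_num : (1 : ℝ) / 2 < 1))] with n hn
  have h1 : 1 ≤ L ^ (β * n) := one_le_rpow hL (by positivity)
  calc (2 : ℝ) ^ (-L ^ (β * n)) ≤ 2 ^ (-1 : ℝ) :=
        rpow_le_rpow_of_exponent_le one_le_two (by linarith)
    _ = 1 / 2 := by norm_num [rpow_neg_one]
    _ < x n := hn

lemma strong_law_ae_comp_of_uniform {Ω α : Type*} [MeasurableSpace Ω] {μ : Measure Ω}
    [IsProbabilityMeasure μ] [Fintype α] [MeasurableSpace α] [MeasurableSingletonClass α]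
    {B : ℕ → Ω → α} (hB : ∀ n, Measurable (B n))
    (hindep : Pairwise fun i j => IndepFun (B i) (B j) μ)
    (hunif : ∀ n i, μ {ω | B n ω = i} = 1 / Fintype.card α) (g : α → ℝ) :
    ∀ᵐ ω ∂μ, Tendsto (fun n : ℕ => (∑ k ∈ range n, g (B k ω)) / n) atTop
      (𝓝 (1 / Fintype.card α * ∑ i, g i)) := by
  have hmap : ∀ n, μ.map (B n) = μ.map (B 0) := fun n => Measure.ext_of_singleton fun i => by
    rw [Measure.map_apply (hB n) (measurableSet_singleton i),
      Measure.map_apply (hB 0) (measurableSet_singleton i)]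
    exact (hunif n i).trans (hunif 0 i).symm
  have hint : Integrable g (μ.map (B 0)) := .of_finite
  have hmean : ∫ ω, g (B 0 ω) ∂μ = 1 / Fintype.card α * ∑ i, g i := by
    rw [← integral_map (hB 0).aemeasurable hint.aestronglyMeasurable, integral_fintype hint,
      mul_sum]
    refine sum_congr rfl fun i _ => ?_
    rw [measureReal_def, Measure.map_apply (hB 0) (measurableSet_singleton i)]
    simp [Set.preimage, hunif 0 i]
  have := strong_law_ae_real (fun n ω => g (B n ω))
    ((integrable_map_measure hint.aestronglyMeasurable (hB 0).aemeasurable).1 hint)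
    (fun i j hij => (hindep hij).comp (measurable_of_finite g) (measurable_of_finite g))
    (fun n => (IdentDistrib.mk (hB n).aemeasurable (hB 0).aemeasurable (hmap n)).comp
      (measurable_of_finite g))
  simpa [hmean] using this
theorem mixed_kernel_rate_of_polarization_general
    {Ω : Type*} [MeasureSpace Ω] [IsProbabilityMeasure (ℙ : Measure Ω)]
    (ℓ : ℕ) (hℓ : 2 ≤ ℓ)
    {I₁ : Type*}
    (B1 : ℕ → Ω → I₁) (B2 : ℕ → Ω → Fin ℓ)
    (hB2meas : ∀ n, Measurable (B2 n))
    (hB2indep : iIndepFun B2 ℙ)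
    (hB2unif : ∀ n (i : Fin ℓ), ℙ {ω | B2 n ω = i} = 1 / ℓ)
    (X : ℕ → Ω → ℝ) (hXmeas : ∀ n, Measurable (X n))
    (hX0 : ∀ ω, X 0 ω ∈ Set.Ioo (0:ℝ) 1)
    (T : Ω → ℕ)
    (f1 : I₁ → ℕ → ℝ → ℝ) (f2 : Fin ℓ → ℕ → ℝ → ℝ)
    (hf1 : ∀ i n, ∀ x ∈ Set.Ioo (0:ℝ) 1, f1 i n x ∈ Set.Ioo (0:ℝ) 1)
    (hf2 : ∀ i n, ∀ x ∈ Set.Ioo (0:ℝ) 1, f2 i n x ∈ Set.Ioo (0:ℝ) 1)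
    (hXrec : ∀ n ω, X (n + 1) ω =
      if n ≤ T ω then f1 (B1 n ω) n (X n ω) else f2 (B2 n ω) n (X n ω))
    (Xinf : Ω → ℝ) (hXinfMeas : Measurable Xinf)
    (hXinfVals : ∀ᵐ ω ∂ℙ, Xinf ω = 0 ∨ Xinf ω = 1)
    (hXconv : ∀ᵐ ω ∂ℙ, Tendsto (fun n => X n ω) atTop (𝓝 (Xinf ω)))
    (q : ℝ)
    (d2 : Fin ℓ → ℕ)
    (hd2 : ∀ i, 1 ≤ d2 i)
    (hfd2 : ∀ i n, ∀ x ∈ Set.Ioo (0:ℝ) 1, f2 i n x ≤ q * x ^ d2 i) :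
    ∀ β : ℝ, 0 ≤ β → β < (1 / (ℓ : ℝ)) * ∑ i, Real.logb ℓ (d2 i) →
      Tendsto (fun n : ℕ => ℙ {ω | X n ω ≤ (2 : ℝ) ^ (-(ℓ : ℝ) ^ (β * n))})
        atTop (𝓝 (ℙ {ω | Xinf ω = 0})) := by
  intro β hβ0 hβE₁
  have hℓ1 : (1 : ℝ) < ℓ := by exact_mod_cast hℓ
  have hXmem : ∀ n ω, X n ω ∈ Set.Ioo (0 : ℝ) 1 := by
    intro n ω
    induction n with
    | zero => exact hX0 ω
    | succ n ih => rw [hXrec]; split_ifs; exacts [hf1 _ _ _ ih, hf2 _ _ _ ih]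
  have hSLLN := strong_law_ae_comp_of_uniform hB2meas (fun i j hij => hB2indep.indepFun hij)
    (by simpa using hB2unif) fun i => logb ℓ (d2 i)
  simp only [Fintype.card_fin] at hSLLN
  refine tendsto_measure_of_ae_tendsto_indicator_of_isFiniteMeasure atTop
    (measurableSet_eq_fun hXinfMeas measurable_const)
    (fun n => measurableSet_le (hXmeas n) measurable_const) ?_
  filter_upwards [hXinfVals, hXconv, hSLLN] with ω hXinf hconv hslln
  rcases hXinf with h0 | h1
  · have hrec : ∀ᶠ n in atTop, X (n + 1) ω ≤ max q 1 * X n ω ^ d2 (B2 n ω) := by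
      filter_upwards [eventually_gt_atTop (T ω)] with n hn
      rw [hXrec, if_neg hn.not_ge]
      exact (hfd2 _ _ _ (hXmem n ω)).trans
        (mul_le_mul_of_nonneg_right (le_max_left q 1) (pow_nonneg (hXmem n ω).1.le _))
    filter_upwards [eventually_le_two_rpow_neg_rpow hℓ1 (le_max_right q 1)
      (fun n => (hXmem n ω).1) (h0 ▸ hconv) (fun n => hd2 _) hrec hslln hβE₁] with n hn
    simp [hn, h0]
  · filter_upwards [eventually_two_rpow_neg_rpow_lt hℓ1.le hβ0 (h1 ▸ hconv)] with n hn
    simp [hn.not_ge, h1]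

/-- **Equation (exponentEx1) of Proposition 4 (abstracted core): achievable rate of
polarization for the mixed-kernel construction.**  A `(0,1)`-valued process `X` is driven in
a first phase (up to a random, a.s. finite, switching time `T` measurable w.r.t. the first
driving sequence) by i.i.d. choices `B1 n : I₁` through maps `f1`, and afterwards by i.i.d.
uniform choices `B2 n : Fin ℓ` through maps `f2`; the two driving sequences and `X 0` are
mutually independent.  Assume `X n → X∞ ∈ {0,1}` a.s., and `f1 i n x ≤ q·x^(d1 i)`,
`f2 i n x ≤ q·x^(d2 i)` on `(0,1)` with all `d`'s `≥ 1` and some `d2 i ≥ 2`.  Then for every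
`0 ≤ β < E₁ = (1/ℓ) ∑ᵢ log_ℓ (d2 i)` we have `P(X n ≤ 2^(−ℓ^(βn))) → P(X∞ = 0)`. -/
theorem mixed_kernel_rate_of_polarization
    {Ω : Type*} [MeasureSpace Ω] [IsProbabilityMeasure (ℙ : Measure Ω)]
    (ℓ : ℕ) (hℓ : 2 ≤ ℓ)
    {I₁ : Type*} [Fintype I₁] [Nonempty I₁] [MeasurableSpace I₁]
    (B1 : ℕ → Ω → I₁) (B2 : ℕ → Ω → Fin ℓ)
    (hB1meas : ∀ n, Measurable (B1 n)) (hB2meas : ∀ n, Measurable (B2 n))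
    (hB1indep : iIndepFun B1 ℙ)
    (hB1id : ∀ n, IdentDistrib (B1 n) (B1 0) ℙ ℙ)
    (hB2indep : iIndepFun B2 ℙ)
    (hB2unif : ∀ n (i : Fin ℓ), ℙ {ω | B2 n ω = i} = 1 / ℓ)
    (X : ℕ → Ω → ℝ) (hXmeas : ∀ n, Measurable (X n))
    (hX0 : ∀ ω, X 0 ω ∈ Set.Ioo (0:ℝ) 1)
    (hmutual : iIndep
      ![⨆ n, MeasurableSpace.comap (B1 n) inferInstance,
        ⨆ n, MeasurableSpace.comap (B2 n) inferInstance,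
        MeasurableSpace.comap (X 0) inferInstance] ℙ)
    (T : Ω → ℕ)
    (hTmeas : @Measurable Ω ℕ (⨆ n, MeasurableSpace.comap (B1 n) inferInstance) _ T)
    (f1 : I₁ → ℕ → ℝ → ℝ) (f2 : Fin ℓ → ℕ → ℝ → ℝ)
    (hf1 : ∀ i n, ∀ x ∈ Set.Ioo (0:ℝ) 1, f1 i n x ∈ Set.Ioo (0:ℝ) 1)
    (hf2 : ∀ i n, ∀ x ∈ Set.Ioo (0:ℝ) 1, f2 i n x ∈ Set.Ioo (0:ℝ) 1)
    (hXrec : ∀ n ω, X (n + 1) ω =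
      if n ≤ T ω then f1 (B1 n ω) n (X n ω) else f2 (B2 n ω) n (X n ω))
    (Xinf : Ω → ℝ) (hXinfMeas : Measurable Xinf)
    (hXinfVals : ∀ᵐ ω ∂ℙ, Xinf ω = 0 ∨ Xinf ω = 1)
    (hXconv : ∀ᵐ ω ∂ℙ, Tendsto (fun n => X n ω) atTop (𝓝 (Xinf ω)))
    (q : ℝ) (hq : 0 < q)
    (d1 : I₁ → ℕ) (d2 : Fin ℓ → ℕ)
    (hd1 : ∀ i, 1 ≤ d1 i) (hd2 : ∀ i, 1 ≤ d2 i) (hd2two : ∃ i, 2 ≤ d2 i)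
    (hfd1 : ∀ i n, ∀ x ∈ Set.Ioo (0:ℝ) 1, f1 i n x ≤ q * x ^ d1 i)
    (hfd2 : ∀ i n, ∀ x ∈ Set.Ioo (0:ℝ) 1, f2 i n x ≤ q * x ^ d2 i) :
    ∀ β : ℝ, 0 ≤ β → β < (1 / (ℓ : ℝ)) * ∑ i, Real.logb ℓ (d2 i) →
      Tendsto (fun n : ℕ => ℙ {ω | X n ω ≤ (2 : ℝ) ^ (-(ℓ : ℝ) ^ (β * n))})
        atTop (𝓝 (ℙ {ω | Xinf ω = 0})) :=
  mixed_kernel_rate_of_polarization_general ℓ hℓ B1 B2 hB2meas hB2indep hB2unif X hXmeas hX0 T f1 f2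
    hf1 hf2 hXrec Xinf hXinfMeas hXinfVals hXconv q d2 hd2 hfd2
end
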